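/- (Explicit formula for the transition coefficients) For every ρ ∈ (−1,1) and all integers n ≥ 2 and k ≥ −1: μ_{nk}(ρ) = Σ_{ℓ=3}^{min(n+1, k+1)} (−1)^{k+1+ℓ} · C(n−2, ℓ−3) · C(k+1, ℓ) · ρ^{n+k+2−2ℓ} · (1−ρ²)^{ℓ−1}, where C(r,s) denotes the binomial coefficient (with C(r,s) = 0 if s < 0 or s > r), and the sum is empty (hence μ_{nk}(ρ) = 0) when min(n+1, k+1) < 3. -/

import Mathlib

/-- The transition coefficients
`μ_{nk}(ρ) = (1−ρ²)² (1/(2πi)) ∮_{|z|=1} (1+ρz)^{n−2} (z+ρ)^{−(n+2)} z^{k+1} dz`. -/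
noncomputable def muCoef (ρ : ℝ) (n k : ℤ) : ℂ :=
  (1 - (ρ : ℂ) ^ 2) ^ 2 * (1 / (2 * Real.pi * Complex.I)) *
    ∮ z in C(0, 1), (1 + (ρ : ℂ) * z) ^ (n - 2) * (z + (ρ : ℂ)) ^ (-(n + 2)) * z ^ (k + 1)

/-!
Put `u = z + ρ`. Then `1 + ρz = ρu + (1 - ρ²)` and `z = u - ρ`, so for `n = N + 2`, `k = K - 1`
the integrand is `P(u) / u^(N+4)` with the polynomial `P = (ρu + 1 - ρ²)^N (u - ρ)^K`. As `|ρ| < 1`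
the pole `u = 0` lies inside the unit circle, so the integral is `2πi` times the coefficient of
`u^(N+3)` in `P`. By the binomial theorem in both factors, the contribution of `u^ℓ` from
`(u - ρ)^K` pairs with `u^(N+3-ℓ)` from the first factor, which exists only for `3 ≤ ℓ ≤ min (N+3) K`.
-/

open Complex Polynomial Finset Metric Real

theorem circleIntegral_sub_zpow_of_mem_ball {c w : ℂ} {R : ℝ} (hw : w ∈ ball c R) (m : ℤ) :
    (∮ z in C(c, R), (z - w) ^ m) = if m = -1 then 2 * π * I else 0 := by
  split_ifs with hm
  · simpa [hm] using circleIntegral.integral_sub_inv_of_mem_ball hw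
  · exact circleIntegral.integral_sub_zpow_of_ne hm c w R

theorem circleIntegral_eval_sub_mul_sub_zpow (p : ℂ[X]) {c w : ℂ} {R : ℝ}
    (hw : w ∈ ball c R) (m : ℕ) :
    (∮ z in C(c, R), p.eval (z - w) * (z - w) ^ (-(m + 1 : ℤ))) = 2 * π * I * p.coeff m := by
  have hR : 0 < R := pos_of_mem_ball hw
  have hw_sphere : w ∉ sphere c |R| := by
    rw [abs_of_pos hR]
    exact fun h => (mem_sphere.1 h).not_lt (mem_ball.1 hw)
  set n := p.natDegree + m + 1
  have hexpand : Set.EqOn (fun z => p.eval (z - w) * (z - w) ^ (-(m + 1 : ℤ)))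
      (fun z => ∑ i ∈ range n, p.coeff i * (z - w) ^ ((i : ℤ) - (m + 1))) (sphere c R) := by
    intro z hz
    have hzw : z - w ≠ 0 := sub_ne_zero.2 fun h => hw_sphere (by rwa [abs_of_pos hR, ← h])
    simp only [eval_eq_sum_range' (show p.natDegree < n by omega), sum_mul, mul_assoc]
    refine sum_congr rfl fun i _ => ?_
    rw [sub_eq_add_neg (i : ℤ), zpow_add₀ hzw, zpow_natCast]
  rw [circleIntegral.integral_congr hR.le hexpand, circleIntegral.integral_fun_sum]
  · simp only [circleIntegral.integral_const_mul, circleIntegral_sub_zpow_of_mem_ball hw,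
      show ∀ i : ℕ, (i : ℤ) - (m + 1) = -1 ↔ i = m by omega, mul_ite, mul_zero]
    rw [sum_ite_eq' (range n) m, if_pos (mem_range.2 (by omega)), mul_comm]
  · exact fun i _ => (circleIntegrable_sub_zpow_iff.2 (Or.inr (Or.inr hw_sphere))).const_mul _

theorem coeff_C_mul_X_add_C_pow {R : Type*} [CommSemiring R] (a b : R) (N i : ℕ) :
    ((C a * X + C b) ^ N).coeff i = a ^ i * b ^ (N - i) * N.choose i := by
  simp only [add_pow, mul_pow, ← C_pow, ← C_eq_natCast, finsetSum_coeff, coeff_mul_C,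
    coeff_C_mul, coeff_X_pow, mul_ite, mul_one, mul_zero, ite_mul, zero_mul]
  rw [sum_ite_eq, ite_eq_left_iff, mem_range, not_lt]
  intro hi
  rw [Nat.choose_eq_zero_of_lt (by omega), Nat.cast_zero, mul_zero]

theorem Finset.sum_Icc_natCast_int {M : Type*} [AddCommMonoid M] (f : ℤ → M) (a b : ℕ) :
    ∑ ℓ ∈ Icc (a : ℤ) b, f ℓ = ∑ ℓ ∈ Icc a b, f ℓ := by
  have hmap : Icc (a : ℤ) b = (Icc a b).map Nat.castEmbedding := by
    ext x
    simp only [mem_Icc, mem_map, Nat.castEmbedding_apply]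
    exact ⟨fun h => ⟨x.toNat, by omega, by omega⟩, by rintro ⟨y, hy, rfl⟩; omega⟩
  rw [hmap, sum_map]
  rfl

noncomputable def muPoly {R : Type*} [CommRing R] (ρ : R) (N K : ℕ) : R[X] :=
  (C ρ * X + C (1 - ρ ^ 2)) ^ N * (X - C ρ) ^ K

theorem coeff_muPoly {R : Type*} [CommRing R] (ρ : R) (N K : ℕ) :
    (muPoly ρ N K).coeff (N + 3) = ∑ ℓ ∈ Icc 3 (min (N + 3) K),
      N.choose (ℓ - 3) * K.choose ℓ * ρ ^ (N + 3 - ℓ) * (-ρ) ^ (K - ℓ) * (1 - ρ ^ 2) ^ (ℓ - 3) := by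
  have hcoeff (ℓ : ℕ) (hℓ : ℓ ≤ N + 3) :
      ((C ρ * X + C (1 - ρ ^ 2)) ^ N).coeff (N + 3 - ℓ) * ((X - C ρ) ^ K).coeff ℓ =
        N.choose (N + 3 - ℓ) * K.choose ℓ * ρ ^ (N + 3 - ℓ) * (-ρ) ^ (K - ℓ) *
          (1 - ρ ^ 2) ^ (ℓ - 3) := by
    rw [coeff_C_mul_X_add_C_pow, sub_eq_add_neg (X : R[X]), ← C_neg, coeff_X_add_C_pow,
      show N - (N + 3 - ℓ) = ℓ - 3 by omega]
    ring
  rw [muPoly, coeff_mul, Nat.sum_antidiagonal_eq_sum_range_succ_mk, ← sum_range_reflect]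
  rw [← sum_subset (s₁ := Icc 3 (min (N + 3) K))]
  · refine sum_congr rfl fun ℓ hℓ => ?_
    simp only [mem_Icc, le_min_iff] at hℓ
    rw [show N + 3 + 1 - 1 - ℓ = N + 3 - ℓ by omega, show N + 3 - (N + 3 - ℓ) = ℓ by omega,
      hcoeff ℓ (by omega), ← Nat.choose_symm (show N + 3 - ℓ ≤ N by omega),
      show N - (N + 3 - ℓ) = ℓ - 3 by omega]
  · intro ℓ; simp only [mem_Icc, le_min_iff, mem_range]; omega
  · intro ℓ hℓ hℓ'
    simp only [mem_Icc, le_min_iff, mem_range, not_and_or, not_le] at hℓ hℓ'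
    rw [show N + 3 + 1 - 1 - ℓ = N + 3 - ℓ by omega, show N + 3 - (N + 3 - ℓ) = ℓ by omega,
      hcoeff ℓ (by omega)]
    rcases hℓ' with h | h | h
    · rw [Nat.choose_eq_zero_of_lt (show N < N + 3 - ℓ by omega)]; simp
    · omega
    · rw [Nat.choose_eq_zero_of_lt h]; simp

theorem muCoef_eq_coeff_muPoly {ρ : ℝ} (hρ : |ρ| < 1) (N K : ℕ) :
    muCoef ρ (N + 2) (K - 1) = (1 - (ρ : ℂ) ^ 2) ^ 2 * (muPoly (ρ : ℂ) N K).coeff (N + 3) := by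
  have hρ_ball : -(ρ : ℂ) ∈ ball 0 1 := by simpa using hρ
  have hintegrand :
      (fun z : ℂ => (1 + ρ * z) ^ ((N : ℤ) + 2 - 2) * (z + ρ) ^ (-((N : ℤ) + 2 + 2)) *
        z ^ ((K : ℤ) - 1 + 1)) =
      fun z => (muPoly (ρ : ℂ) N K).eval (z - -(ρ : ℂ)) *
        (z - -(ρ : ℂ)) ^ (-((N + 3 : ℕ) + 1 : ℤ)) := by
    funext z
    simp only [muPoly, eval_mul, eval_pow, eval_add, eval_mul, eval_C, eval_X, eval_sub]
    rw [add_sub_cancel_right, sub_add_cancel, sub_neg_eq_add, zpow_natCast, zpow_natCast]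
    push_cast
    ring_nf
  rw [muCoef, hintegrand, circleIntegral_eval_sub_mul_sub_zpow _ hρ_ball]
  field_simp

/-- Explicit formula: for `n ≥ 2`, `k ≥ −1`,
`μ_{nk}(ρ) = Σ_{ℓ=3}^{min(n+1,k+1)} (−1)^{k+1+ℓ} C(n−2,ℓ−3) C(k+1,ℓ) ρ^{n+k+2−2ℓ} (1−ρ²)^{ℓ−1}`
(the sum being empty when `min(n+1,k+1) < 3`). -/
theorem muCoef_explicit (ρ : ℝ) (hρ : ρ ∈ Set.Ioo (-1 : ℝ) 1) (n k : ℤ)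
    (hn : 2 ≤ n) (hk : -1 ≤ k) :
    muCoef ρ n k = ∑ ℓ ∈ Finset.Icc (3 : ℤ) (min (n + 1) (k + 1)),
      (-1 : ℂ) ^ (k + 1 + ℓ) *
        ((n - 2).toNat.choose (ℓ - 3).toNat : ℂ) *
        ((k + 1).toNat.choose ℓ.toNat : ℂ) *
        (ρ : ℂ) ^ (n + k + 2 - 2 * ℓ) *
        (1 - (ρ : ℂ) ^ 2) ^ (ℓ - 1) := by
  obtain ⟨N, rfl⟩ : ∃ N : ℕ, n = N + 2 := ⟨(n - 2).toNat, by omega⟩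
  obtain ⟨K, rfl⟩ : ∃ K : ℕ, k = K - 1 := ⟨(k + 1).toNat, by omega⟩
  have hbound : min ((N : ℤ) + 2 + 1) (K - 1 + 1) = ((min (N + 3) K : ℕ) : ℤ) := by omega
  rw [muCoef_eq_coeff_muPoly (abs_lt.2 hρ), coeff_muPoly, mul_sum, hbound,
    show (3 : ℤ) = ((3 : ℕ) : ℤ) from rfl, sum_Icc_natCast_int]
  refine sum_congr rfl fun ℓ hℓ => ?_
  simp only [mem_Icc, le_min_iff] at hℓ
  rw [Nat.cast_ofNat, show (K : ℤ) - 1 + 1 + ℓ = ((K - ℓ + 2 * ℓ : ℕ) : ℤ) by omega,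
    show (N : ℤ) + 2 + (K - 1) + 2 - 2 * ℓ = ((N + 3 - ℓ + (K - ℓ) : ℕ) : ℤ) by omega,
    show (ℓ : ℤ) - 1 = ((ℓ - 3 + 2 : ℕ) : ℤ) by omega,
    show ((N : ℤ) + 2 - 2).toNat = N by omega, show ((ℓ : ℤ) - 3).toNat = ℓ - 3 by omega,
    show ((K : ℤ) - 1 + 1).toNat = K by omega, Int.toNat_natCast]
  simp only [zpow_natCast, pow_add, pow_mul, neg_one_sq, one_pow, neg_pow (ρ : ℂ)]
  ring
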